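/- Let N be a multiplicative seminorm on A_r bounded by ‖·‖_{hyb,r} whose restriction to the constant series is the trivial norm (N(c) = 1 for every c ∈ ℂ ∖ {0}). Then N(f) = r^{ord_0(f)} for every nonzero f ∈ A_r; that is, N = τ(0). -/

import Mathlib

/-- The hybrid norm on `ℂ`: `|c|_hyb = max {1, |c|}` for `c ≠ 0`, and `|0|_hyb = 0`. -/
noncomputable def hybNorm (c : ℂ) : ℝ := if c = 0 then 0 else max 1 (‖c‖)

/-- The ring `A_r` of formal Laurent series `f = ∑ aₙ tⁿ` with
`∑ |aₙ|_hyb rⁿ < ∞`, viewed as a subset of `ℂ((t))`. -/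
def Ar (r : ℝ) : Set (LaurentSeries ℂ) :=
  {f | Summable fun n : ℤ => hybNorm (f.coeff n) * r ^ n}

/-- The hybrid norm `‖f‖_{hyb,r} = ∑ |aₙ|_hyb rⁿ` of a Laurent series. -/
noncomputable def hybnorm (r : ℝ) (f : LaurentSeries ℂ) : ℝ :=
  ∑' n : ℤ, hybNorm (f.coeff n) * r ^ n

open scoped Classical

/-- The sum of the Laurent series of `f` at a point `z ∈ ℂ`. -/
noncomputable def lEval (f : LaurentSeries ℂ) (z : ℂ) : ℂ :=
  ∑' n : ℤ, f.coeff n * z ^ n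

/-- The seminorm `τ(z)` on `A_r`: for `z = 0` it is `f ↦ r^{ord₀ f}` (with `0 ↦ 0`),
and for `0 < |z| ≤ r` it is `f ↦ |f(z)|^{log r / log |z|}`. -/
noncomputable def tau (r : ℝ) (z : ℂ) (f : LaurentSeries ℂ) : ℝ :=
  if z = 0 then (if f = 0 then 0 else r ^ f.order)
  else ‖lEval f z‖ ^ (Real.log r / Real.log (‖z‖))

/-- `N` is a multiplicative seminorm on the subset `S` of `ℂ((t))` (relativized to `S`):
`N 0 = 0`, `N 1 = 1`, `N` is nonnegative, multiplicative and subadditive on `S`. -/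
def IsMultSeminormOn (S : Set (LaurentSeries ℂ)) (N : LaurentSeries ℂ → ℝ) : Prop :=
  N 0 = 0 ∧ N 1 = 1 ∧ (∀ f ∈ S, 0 ≤ N f) ∧
    (∀ f ∈ S, ∀ g ∈ S, N (f * g) = N f * N g) ∧
    (∀ f ∈ S, ∀ g ∈ S, N (f + g) ≤ N f + N g)

/-!
Multiplying `f` by a small nonzero constant `ε` does not change `N f`, while it shrinks every
coefficient of `f` to hybrid norm about `1`; hence `N f ≤ ∑_{n ≥ ord f} rⁿ = r^{ord f} / (1 - r)`.
Applying this to the powers `fᵏ` and taking `k`-th roots removes the factor `1 / (1 - r)`.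
The resulting bound `N t^d ≤ r^d` for all `d ∈ ℤ` together with `N t^d · N t^{-d} = 1` forces
`N t^d = r^d`. Writing `a t^d` for the leading term of `f`, the remainder `a t^d - f` has order
`> d`, so `r^d = N (a t^d) ≤ N f + r^{d+1}`; the power trick once more turns
`N f ≥ (1 - r) r^d` into `N f ≥ r^d`.
-/

open HahnSeries Filter Topology

lemma hybNorm_zero : hybNorm 0 = 0 := if_pos rfl

lemma hybNorm_nonneg (c : ℂ) : 0 ≤ hybNorm c := by
  unfold hybNorm
  split_ifs
  exacts [le_rfl, zero_le_one.trans (le_max_left _ _)]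

lemma hybNorm_neg (c : ℂ) : hybNorm (-c) = hybNorm c := by
  simp [hybNorm]

lemma norm_le_hybNorm (c : ℂ) : ‖c‖ ≤ hybNorm c := by
  unfold hybNorm
  split_ifs with hc
  · simp [hc]
  · exact le_max_right _ _

lemma hybNorm_add_le (a b : ℂ) : hybNorm (a + b) ≤ hybNorm a + hybNorm b := by
  rcases eq_or_ne a 0 with rfl | ha
  · simp [hybNorm_zero]
  rcases eq_or_ne b 0 with rfl | hb
  · simp [hybNorm_zero]
  rcases eq_or_ne (a + b) 0 with hab | hab
  · rw [hab, hybNorm_zero]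
    exact add_nonneg (hybNorm_nonneg a) (hybNorm_nonneg b)
  simp only [hybNorm, if_neg ha, if_neg hb, if_neg hab]
  refine max_le (by linarith [le_max_left 1 ‖a‖, le_max_left 1 ‖b‖]) ?_
  linarith [norm_add_le a b, le_max_right 1 ‖a‖, le_max_right 1 ‖b‖]

lemma hybNorm_sum_le {ι : Type*} (s : Finset ι) (c : ι → ℂ) :
    hybNorm (∑ i ∈ s, c i) ≤ ∑ i ∈ s, hybNorm (c i) :=
  Finset.le_sum_of_subadditive hybNorm hybNorm_zero.le hybNorm_add_le s c

lemma hybNorm_mul_le (a b : ℂ) : hybNorm (a * b) ≤ hybNorm a * hybNorm b := by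
  rcases eq_or_ne a 0 with rfl | ha
  · simp [hybNorm_zero]
  rcases eq_or_ne b 0 with rfl | hb
  · simp [hybNorm_zero]
  simp only [hybNorm, if_neg ha, if_neg hb, if_neg (mul_ne_zero ha hb), norm_mul]
  refine max_le ?_ ?_
  · exact one_le_mul_of_one_le_of_one_le (le_max_left _ _) (le_max_left _ _)
  · exact mul_le_mul (le_max_right _ _) (le_max_right _ _) (norm_nonneg _)
      (zero_le_one.trans (le_max_left _ _))

lemma hybNorm_ofReal_mul_le {ε : ℝ} (hε : 0 ≤ ε) (c : ℂ) :
    hybNorm (ε * c) ≤ 1 + ε * hybNorm c := by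
  rcases eq_or_ne ((ε : ℂ) * c) 0 with h | h
  · rw [h, hybNorm_zero]
    linarith [mul_nonneg hε (hybNorm_nonneg c)]
  rw [hybNorm, if_neg h]
  refine max_le (by linarith [mul_nonneg hε (hybNorm_nonneg c)]) ?_
  rw [norm_mul, Complex.norm_real, Real.norm_of_nonneg hε]
  linarith [mul_le_mul_of_nonneg_left (norm_le_hybNorm c) hε]

section Ar

variable {r : ℝ}

lemma hybNorm_mul_zpow_nonneg (hr0 : 0 < r) (c : ℂ) (n : ℤ) : 0 ≤ hybNorm c * r ^ n :=
  mul_nonneg (hybNorm_nonneg c) (zpow_nonneg hr0.le n)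

lemma single_mem_Ar (d : ℤ) (c : ℂ) : single d c ∈ Ar r := by
  refine summable_of_ne_finset_zero (s := {d}) fun n hn => ?_
  rw [coeff_single_of_ne (by simpa using hn), hybNorm_zero, zero_mul]

lemma C_mem_Ar (c : ℂ) : C c ∈ Ar r := by
  rw [C_apply]
  exact single_mem_Ar 0 c

lemma hybNorm_coeff_mul_mul_zpow_le (hr0 : 0 < r) (f g : LaurentSeries ℂ) (n : ℤ) :
    hybNorm ((f * g).coeff n) * r ^ n ≤
      ∑ p ∈ Finset.antidiagonal f.isPWO_support g.isPWO_support n,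
        hybNorm (f.coeff p.1) * r ^ p.1 * (hybNorm (g.coeff p.2) * r ^ p.2) := by
  rw [coeff_mul]
  calc _ ≤ (∑ p ∈ Finset.antidiagonal f.isPWO_support g.isPWO_support n,
          hybNorm (f.coeff p.1 * g.coeff p.2)) * r ^ n :=
        mul_le_mul_of_nonneg_right (hybNorm_sum_le _ _) (zpow_nonneg hr0.le n)
    _ ≤ _ := by
      rw [Finset.sum_mul]
      refine Finset.sum_le_sum fun p hp => ?_
      rw [← (Finset.mem_antidiagonal.mp hp).2.2, zpow_add₀ hr0.ne', mul_mul_mul_comm]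
      exact mul_le_mul_of_nonneg_right (hybNorm_mul_le _ _) (by positivity)

lemma mul_mem_Ar (hr0 : 0 < r) {f g : LaurentSeries ℂ} (hf : f ∈ Ar r) (hg : g ∈ Ar r) :
    f * g ∈ Ar r := by
  set F : ℤ × ℤ → ℝ := fun p => hybNorm (f.coeff p.1) * r ^ p.1 * (hybNorm (g.coeff p.2) * r ^ p.2)
  have hF : Summable F := Summable.mul_of_nonneg hf hg
    (fun n => hybNorm_mul_zpow_nonneg hr0 _ n) (fun n => hybNorm_mul_zpow_nonneg hr0 _ n)
  have hdisj : ∀ u : Finset ℤ,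
      (u : Set ℤ).PairwiseDisjoint (Finset.antidiagonal f.isPWO_support g.isPWO_support) :=
    fun u m _ n _ hmn => Finset.disjoint_left.mpr fun p hm hn =>
      hmn ((Finset.mem_antidiagonal.mp hm).2.2.symm.trans (Finset.mem_antidiagonal.mp hn).2.2)
  refine summable_of_sum_le (c := ∑' p, F p) (fun n => hybNorm_mul_zpow_nonneg hr0 _ n) fun u => ?_
  calc _ ≤ ∑ n ∈ u, ∑ p ∈ Finset.antidiagonal f.isPWO_support g.isPWO_support n, F p :=
        Finset.sum_le_sum fun n _ => hybNorm_coeff_mul_mul_zpow_le hr0 f g n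
    _ = ∑ p ∈ u.biUnion (Finset.antidiagonal f.isPWO_support g.isPWO_support), F p :=
        (Finset.sum_biUnion (hdisj u)).symm
    _ ≤ ∑' p, F p :=
        hF.sum_le_tsum _ fun p _ => mul_nonneg (hybNorm_mul_zpow_nonneg hr0 _ _)
          (hybNorm_mul_zpow_nonneg hr0 _ _)

def arSubring (hr0 : 0 < r) : Subring (LaurentSeries ℂ) where
  carrier := Ar r
  zero_mem' := by simpa using single_mem_Ar (r := r) (0 : ℤ) (0 : ℂ)
  one_mem' := by simpa using single_mem_Ar (r := r) (0 : ℤ) (1 : ℂ)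
  add_mem' {f g} hf hg := by
    refine (hf.add hg).of_nonneg_of_le (fun n => hybNorm_mul_zpow_nonneg hr0 _ n) fun n => ?_
    rw [coeff_add, ← add_mul]
    exact mul_le_mul_of_nonneg_right (hybNorm_add_le _ _) (zpow_nonneg hr0.le n)
  neg_mem' {f} hf := by simpa [Ar, hybNorm_neg] using hf
  mul_mem' := mul_mem_Ar hr0

end Ar

lemma hasSum_indicator_Ici_zpow {r : ℝ} (hr0 : 0 < r) (hr1 : r < 1) (d : ℤ) :
    HasSum ((Set.Ici d).indicator (r ^ ·)) (r ^ d / (1 - r)) := by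
  have hinj : Function.Injective fun k : ℕ => d + k := fun a b h => by simpa using h
  have hrange : ∀ n ∉ Set.range fun k : ℕ => d + k, (Set.Ici d).indicator (r ^ ·) n = 0 := by
    intro n hn
    refine Set.indicator_of_notMem (fun hdn => hn ⟨(n - d).toNat, ?_⟩) _
    have : d ≤ n := hdn
    show d + ((n - d).toNat : ℤ) = n
    omega
  refine (hinj.hasSum_iff hrange).mp ?_
  have hcomp : ((Set.Ici d).indicator (r ^ ·) ∘ fun k : ℕ => d + k) = fun k => r ^ d * r ^ k := by
    ext k
    simp [zpow_add₀ hr0.ne']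
  rw [hcomp, div_eq_mul_inv]
  exact (hasSum_geometric_of_lt_one hr0.le hr1).mul_left (r ^ d)

lemma le_of_forall_pow_le_mul_pow {x y C : ℝ} (hy : 0 < y) (h : ∀ k : ℕ, x ^ k ≤ C * y ^ k) :
    x ≤ y := by
  by_contra! hxy
  obtain ⟨k, hk⟩ := pow_unbounded_of_one_lt C ((one_lt_div hy).mpr hxy)
  rw [div_pow, lt_div_iff₀ (pow_pos hy k)] at hk
  exact (h k).not_gt hk

lemma hybnorm_ofReal_C_mul_le {r : ℝ} (hr0 : 0 < r) (hr1 : r < 1) {f : LaurentSeries ℂ}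
    (hf : f ∈ Ar r) {d : ℤ} (hd : (d : WithTop ℤ) ≤ f.orderTop) {ε : ℝ} (hε : 0 ≤ ε) :
    hybnorm r (C (ε : ℂ) * f) ≤ r ^ d / (1 - r) + ε * hybnorm r f := by
  have hterm : ∀ n : ℤ, hybNorm ((C (ε : ℂ) * f).coeff n) * r ^ n ≤
      (Set.Ici d).indicator (r ^ ·) n + ε * (hybNorm (f.coeff n) * r ^ n) := by
    intro n
    rw [C_apply, coeff_single_zero_mul]
    by_cases hn : f.coeff n = 0
    · simp only [hn, mul_zero, hybNorm_zero, zero_mul, add_zero]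
      exact Set.indicator_nonneg (fun n _ => zpow_nonneg hr0.le n) n
    have hdn : d ≤ n := by
      by_contra! hnd
      exact hn (coeff_eq_zero_of_lt_orderTop ((WithTop.coe_lt_coe.mpr hnd).trans_le hd))
    rw [Set.indicator_of_mem (Set.mem_Ici.mpr hdn)]
    calc _ ≤ (1 + ε * hybNorm (f.coeff n)) * r ^ n :=
          mul_le_mul_of_nonneg_right (hybNorm_ofReal_mul_le hε _) (zpow_nonneg hr0.le n)
      _ = _ := by ring
  exact hasSum_le hterm (Summable.hasSum (mul_mem_Ar hr0 (C_mem_Ar _) hf))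
    ((hasSum_indicator_Ici_zpow hr0 hr1 d).add ((Summable.hasSum hf).mul_left ε))

namespace IsMultSeminormOn

variable {r : ℝ} {N : LaurentSeries ℂ → ℝ}

lemma map_pow (hN : IsMultSeminormOn (Ar r) N) (hr0 : 0 < r) {f : LaurentSeries ℂ}
    (hf : f ∈ Ar r) (k : ℕ) : N (f ^ k) = N f ^ k := by
  induction k with
  | zero => simpa using hN.2.1
  | succ k ih => rw [pow_succ, pow_succ, hN.2.2.2.1 _ ((arSubring hr0).pow_mem hf k) _ hf, ih]

lemma map_C_mul (hN : IsMultSeminormOn (Ar r) N) (htriv : ∀ c : ℂ, c ≠ 0 → N (C c) = 1)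
    {c : ℂ} (hc : c ≠ 0) {f : LaurentSeries ℂ} (hf : f ∈ Ar r) : N (C c * f) = N f := by
  rw [hN.2.2.2.1 _ (C_mem_Ar c) _ hf, htriv c hc, one_mul]

lemma le_zpow_div_of_le_orderTop (hN : IsMultSeminormOn (Ar r) N) (hr0 : 0 < r) (hr1 : r < 1)
    (hbd : ∀ f ∈ Ar r, N f ≤ hybnorm r f) (htriv : ∀ c : ℂ, c ≠ 0 → N (C c) = 1)
    {f : LaurentSeries ℂ} (hf : f ∈ Ar r) {d : ℤ} (hd : (d : WithTop ℤ) ≤ f.orderTop) :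
    N f ≤ r ^ d / (1 - r) := by
  have hlim : Tendsto (fun ε : ℝ => r ^ d / (1 - r) + ε * hybnorm r f) (𝓝[>] 0)
      (𝓝 (r ^ d / (1 - r))) := by
    have hcont : Continuous fun ε : ℝ => r ^ d / (1 - r) + ε * hybnorm r f := by fun_prop
    simpa using (hcont.tendsto 0).mono_left nhdsWithin_le_nhds
  refine ge_of_tendsto hlim (eventually_nhdsWithin_of_forall fun ε (hε : 0 < ε) => ?_)
  calc N f = N (C (ε : ℂ) * f) := (hN.map_C_mul htriv (by exact_mod_cast hε.ne') hf).symm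
    _ ≤ hybnorm r (C (ε : ℂ) * f) := hbd _ (mul_mem_Ar hr0 (C_mem_Ar _) hf)
    _ ≤ _ := hybnorm_ofReal_C_mul_le hr0 hr1 hf hd hε.le

lemma le_zpow_of_le_orderTop (hN : IsMultSeminormOn (Ar r) N) (hr0 : 0 < r) (hr1 : r < 1)
    (hbd : ∀ f ∈ Ar r, N f ≤ hybnorm r f) (htriv : ∀ c : ℂ, c ≠ 0 → N (C c) = 1)
    {f : LaurentSeries ℂ} (hf : f ∈ Ar r) {d : ℤ} (hd : (d : WithTop ℤ) ≤ f.orderTop) :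
    N f ≤ r ^ d := by
  refine le_of_forall_pow_le_mul_pow (C := (1 - r)⁻¹) (zpow_pos hr0 d) fun k => ?_
  have hdk : ((k • d : ℤ) : WithTop ℤ) ≤ (f ^ k).orderTop := by
    rw [WithTop.coe_nsmul]
    exact (nsmul_le_nsmul_right hd k).trans orderTop_nsmul_le_orderTop_pow
  calc N f ^ k = N (f ^ k) := (hN.map_pow hr0 hf k).symm
    _ ≤ r ^ (k • d) / (1 - r) :=
        hN.le_zpow_div_of_le_orderTop hr0 hr1 hbd htriv ((arSubring hr0).pow_mem hf k) hdk
    _ = (1 - r)⁻¹ * (r ^ d) ^ k := by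
        rw [div_eq_inv_mul, nsmul_eq_mul, zpow_mul', zpow_natCast]

lemma map_single_one (hN : IsMultSeminormOn (Ar r) N) (hr0 : 0 < r) (hr1 : r < 1)
    (hbd : ∀ f ∈ Ar r, N f ≤ hybnorm r f) (htriv : ∀ c : ℂ, c ≠ 0 → N (C c) = 1) (d : ℤ) :
    N (single d (1 : ℂ)) = r ^ d := by
  have hle : ∀ e : ℤ, N (single e (1 : ℂ)) ≤ r ^ e := fun e =>
    hN.le_zpow_of_le_orderTop hr0 hr1 hbd htriv (single_mem_Ar e 1) orderTop_single_le
  have hprod : N (single d (1 : ℂ)) * N (single (-d) 1) = 1 := by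
    rw [← hN.2.2.2.1 _ (single_mem_Ar d 1) _ (single_mem_Ar (-d) 1), single_mul_single,
      add_neg_cancel, mul_one, single_zero_one, hN.2.1]
  refine (hle d).antisymm ?_
  have h1 : 1 ≤ N (single d (1 : ℂ)) / r ^ d :=
    calc 1 = _ := hprod.symm
      _ ≤ N (single d (1 : ℂ)) * r ^ (-d) :=
          mul_le_mul_of_nonneg_left (hle (-d)) (hN.2.2.1 _ (single_mem_Ar d 1))
      _ = _ := by rw [zpow_neg, div_eq_mul_inv]
  rwa [one_le_div (zpow_pos hr0 d)] at h1

lemma zpow_order_mul_le (hN : IsMultSeminormOn (Ar r) N) (hr0 : 0 < r) (hr1 : r < 1)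
    (hbd : ∀ f ∈ Ar r, N f ≤ hybnorm r f) (htriv : ∀ c : ℂ, c ≠ 0 → N (C c) = 1)
    {f : LaurentSeries ℂ} (hf : f ∈ Ar r) (hf0 : f ≠ 0) : r ^ f.order * (1 - r) ≤ N f := by
  set d := f.order
  set a := f.leadingCoeff with ha_def
  have ha : a ≠ 0 := leadingCoeff_ne_zero.mpr hf0
  have hmem : single d a - f ∈ Ar r := (arSubring hr0).sub_mem (single_mem_Ar d a) hf
  have htail : ((d + 1 : ℤ) : WithTop ℤ) ≤ (single d a - f).orderTop := by
    refine le_orderTop_iff_forall.mpr fun j hj => ?_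
    have hjd : j ≤ d := Int.lt_add_one_iff.mp (WithTop.coe_lt_coe.mp hj)
    rcases hjd.lt_or_eq with hjd | rfl
    · rw [coeff_sub, coeff_single_of_ne hjd.ne, coeff_eq_zero_of_lt_order hjd, sub_zero]
    · rw [coeff_sub, coeff_single_same, ha_def, leadingCoeff_eq, sub_self]
  have hlead : N (single d a) = r ^ d := by
    have : single d a = C a * single d 1 := by rw [C_apply, single_mul_single, zero_add, mul_one]
    rw [this, hN.map_C_mul htriv ha (single_mem_Ar d 1), hN.map_single_one hr0 hr1 hbd htriv]
  have : r ^ d ≤ N f + r ^ d * r :=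
    calc r ^ d = N (f + (single d a - f)) := by rw [add_sub_cancel, hlead]
      _ ≤ N f + N (single d a - f) := hN.2.2.2.2 _ hf _ hmem
      _ ≤ N f + r ^ (d + 1) :=
          add_le_add_right (hN.le_zpow_of_le_orderTop hr0 hr1 hbd htriv hmem htail) _
      _ = N f + r ^ d * r := by rw [zpow_add_one₀ hr0.ne']
  linarith

lemma zpow_order_le (hN : IsMultSeminormOn (Ar r) N) (hr0 : 0 < r) (hr1 : r < 1)
    (hbd : ∀ f ∈ Ar r, N f ≤ hybnorm r f) (htriv : ∀ c : ℂ, c ≠ 0 → N (C c) = 1)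
    {f : LaurentSeries ℂ} (hf : f ∈ Ar r) (hf0 : f ≠ 0) : r ^ f.order ≤ N f := by
  have h1r : 0 < 1 - r := sub_pos.mpr hr1
  have hpos : 0 < N f :=
    (mul_pos (zpow_pos hr0 _) h1r).trans_le (hN.zpow_order_mul_le hr0 hr1 hbd htriv hf hf0)
  refine le_of_forall_pow_le_mul_pow (C := (1 - r)⁻¹) hpos fun k => ?_
  have hk := hN.zpow_order_mul_le hr0 hr1 hbd htriv ((arSubring hr0).pow_mem hf k)
    (pow_ne_zero k hf0)
  rw [order_pow, hN.map_pow hr0 hf k, nsmul_eq_mul, zpow_mul', zpow_natCast] at hk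
  rw [le_inv_mul_iff₀ h1r]
  linarith

end IsMultSeminormOn

/-- A multiplicative seminorm on `A_r` bounded by `‖·‖_{hyb,r}` whose
restriction to the constants is the trivial norm equals `τ(0)`, i.e. `N f = r^{ord₀ f}`
for every nonzero `f ∈ A_r`. -/
theorem seminorm_trivial_on_C_eq_tau_zero (r : ℝ) (hr0 : 0 < r) (hr1 : r < 1)
    (N : LaurentSeries ℂ → ℝ) (hN : IsMultSeminormOn (Ar r) N)
    (hbd : ∀ f ∈ Ar r, N f ≤ hybnorm r f)
    (htriv : ∀ c : ℂ, c ≠ 0 → N (HahnSeries.C c) = 1) :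
    (∀ f ∈ Ar r, f ≠ 0 → N f = r ^ f.order) ∧ (∀ f ∈ Ar r, N f = tau r 0 f) := by
  have hord : ∀ f ∈ Ar r, f ≠ 0 → N f = r ^ f.order := fun f hf hf0 =>
    (hN.le_zpow_of_le_orderTop hr0 hr1 hbd htriv hf (order_eq_orderTop_of_ne_zero hf0).le).antisymm
      (hN.zpow_order_le hr0 hr1 hbd htriv hf hf0)
  refine ⟨hord, fun f hf => ?_⟩
  rcases eq_or_ne f 0 with rfl | hf0
  · simp [tau, hN.1]
  · simp [tau, hf0, hord f hf hf0]
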